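/- For a simplicial object A in a semi-abelian category, H₀A = 0 if and only if the morphism (∂₀, ∂₁) : A₁ → A₀ × A₀ is a regular epimorphism. -/

import Mathlib

universe w v u
noncomputable section
open CategoryTheory CategoryTheory.Limits CategoryTheory.Subobject Opposite Simplicial

namespace SemiAbPaper
section Base


variable {C : Type u} [Category.{v} C]

/-- A regular epimorphism (propositional form). -/
def IsRegEpi {X Y : C} (f : X ⟶ Y) : Prop := Nonempty (RegularEpi f)

/-- A regular projective object. -/
def RegularProjective (P : C) : Prop :=
  ∀ {X Y : C} (e : X ⟶ Y), IsRegEpi e → ∀ g : P ⟶ Y, ∃ h : P ⟶ X, h ≫ e = g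

/-- `C` has enough regular projectives. -/
def EnoughRegularProjectives (C : Type u) [Category.{v} C] : Prop :=
  ∀ X : C, ∃ (P : C) (p : P ⟶ X), RegularProjective P ∧ IsRegEpi p

/-- A regular category: finitely complete, coequalizers of kernel pairs,
regular epimorphisms stable under pullback. -/
class IsRegularCategory (C : Type u) [Category.{v} C] [HasFiniteLimits C] : Prop where
  hasCoequalizersOfKernelPairs :
    ∀ {X Y : C} (f : X ⟶ Y), HasColimit (parallelPair (pullback.fst f f) (pullback.snd f f))
  regularEpiPullbackStable :
    ∀ {X Y Z : C} (f : X ⟶ Y) (g : Z ⟶ Y), IsRegEpi f → IsRegEpi (pullback.snd f g)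

/-- A semi-abelian category (relative to ambient pointedness and finite completeness):
Barr-exact, Bourn-protomodular, with binary coproducts and a zero object. -/
class IsSemiAbelian (C : Type u) [Category.{v} C] [HasZeroMorphisms C] [HasFiniteLimits C] :
    Prop where
  hasZeroObject : HasZeroObject C
  hasBinaryCoproducts : HasBinaryCoproducts C
  hasCoequalizersOfKernelPairs :
    ∀ {X Y : C} (f : X ⟶ Y), HasColimit (parallelPair (pullback.fst f f) (pullback.snd f f))
  regularEpiPullbackStable :
    ∀ {X Y Z : C} (f : X ⟶ Y) (g : Z ⟶ Y), IsRegEpi f → IsRegEpi (pullback.snd f g)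
  /-- Barr-exactness: every internal equivalence relation is a kernel pair. -/
  exactEquivalenceRelations :
    ∀ {R X : C} (r₀ r₁ : R ⟶ X),
      (∀ {T : C} (a b : T ⟶ R), a ≫ r₀ = b ≫ r₀ → a ≫ r₁ = b ≫ r₁ → a = b) →
      (∀ T : C, _root_.Equivalence fun x y : T ⟶ X => ∃ t : T ⟶ R, t ≫ r₀ = x ∧ t ≫ r₁ = y) →
      ∃ (Y : C) (f : X ⟶ Y), IsKernelPair f r₀ r₁
  /-- Bourn-protomodularity: the Short Five Lemma. -/
  protomodular :
    ∀ {E' B' E B : C} (p' : E' ⟶ B') (p : E ⟶ B), IsRegEpi p' → IsRegEpi p →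
      ∀ (v : E' ⟶ E) (w : B' ⟶ B), p' ≫ w = v ≫ p →
      ∀ u : kernel p' ⟶ kernel p, u ≫ kernel.ι p = kernel.ι p' ≫ v →
      IsIso u → IsIso w → IsIso v


end Base

section MoorePart

variable {C : Type u} [Category.{v} C] [HasZeroMorphisms C] [HasFiniteLimits C]

namespace Moore

variable (X : SimplicialObject C)

/-- The `n`-th object of the Moore complex of `X`:
the intersection of the kernels of `∂ᵢ : Xₙ ⟶ X_{n-1}` for `0 ≤ i ≤ n-1`. -/
def NSub : ∀ n : ℕ, Subobject (X _⦋n⦌) := fun n => match n with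
  | 0 => ⊤
  | n + 1 => Finset.univ.inf fun k : Fin (n + 1) => kernelSubobject (X.δ k.castSucc)

/-- The `n`-th object of the Moore complex, as an object of `C`. -/
def NObj (n : ℕ) : C := (NSub X n : C)

theorem arrow_comp_δ_castSucc (n : ℕ) (i : Fin (n + 1)) :
    (NSub X (n + 1)).arrow ≫ X.δ i.castSucc = 0 := by
  show (Finset.univ.inf fun k : Fin (n + 1) =>
      kernelSubobject (X.δ k.castSucc)).arrow ≫ X.δ i.castSucc = 0
  rw [← factorThru_arrow _ _ (finset_inf_arrow_factors Finset.univ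
      (fun k : Fin (n + 1) => kernelSubobject (X.δ k.castSucc)) i (Finset.mem_univ _)),
    Category.assoc, kernelSubobject_arrow_comp, comp_zero]

/-- The differential `dₙ₊₁ : Nₙ₊₁X ⟶ NₙX` of the Moore complex, induced by the
last face `∂ₙ₊₁`. -/
def MooreD : ∀ n : ℕ, NObj X (n + 1) ⟶ NObj X n := fun n => match n with
  | 0 => (NSub X 1).arrow ≫ X.δ (Fin.last 1) ≫ @inv _ _ _ _ (⊤ : Subobject (X _⦋0⦌)).arrow Subobject.top_arrow_isIso
  | n + 1 =>
    factorThru _ ((NSub X (n + 2)).arrow ≫ X.δ (Fin.last (n + 2))) (by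
      refine (finset_inf_factors _).mpr fun i _ => ?_
      apply kernelSubobject_factors
      show ((NSub X (n + 2)).arrow ≫ X.δ (Fin.last (n + 2))) ≫ X.δ i.castSucc = 0
      rw [Category.assoc,
        show X.δ (Fin.last (n + 2)) = X.δ ((Fin.last (n + 1)).succ) from by rw [Fin.succ_last],
        X.δ_comp_δ (Fin.le_last i.castSucc), ← Category.assoc,
        arrow_comp_δ_castSucc, zero_comp])

theorem d_squared (n : ℕ) : MooreD X (n + 1) ≫ MooreD X n = 0 := by
  rcases n with _ | n <;> dsimp [MooreD]
  · erw [factorThru_arrow_assoc,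
      show X.δ (Fin.last 2) = X.δ ((Fin.last 1).succ) from by erw [Fin.succ_last],
      Category.assoc, X.δ_comp_δ_assoc (le_refl (Fin.last 1)), ← Category.assoc,
      arrow_comp_δ_castSucc, zero_comp]
  · apply (cancel_mono (NSub X (n + 1)).arrow).1
    erw [Category.assoc, factorThru_arrow, factorThru_arrow_assoc,
      show X.δ (Fin.last (n + 3)) = X.δ ((Fin.last (n + 2)).succ) from by erw [Fin.succ_last],
      Category.assoc, X.δ_comp_δ (le_refl (Fin.last (n + 2))), ← Category.assoc,
      arrow_comp_δ_castSucc, zero_comp, zero_comp]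

variable [HasCokernels C]

/-- The homology `HₙX` of the Moore complex of `X`:
the cokernel of the factorization of `dₙ₊₁` through the kernel of `dₙ`. -/
def H : ℕ → C := fun n => match n with
  | 0 => cokernel (MooreD X 0)
  | n + 1 => cokernel (kernel.lift (MooreD X n) (MooreD X (n + 1)) (d_squared X n))

/-- The object of `n`-cycles `ZₙX = ⋂_{i ∈ [n]} K[∂ᵢ]`
(realized as `X₀` for `n = 0` and as the kernel of `dₙ` for `n ≥ 1`). -/
def Z : ℕ → C := fun n => match n with
  | 0 => X _⦋0⦌
  | n + 1 => kernel (MooreD X n)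

/-- The monomorphism `ZₙX ⟶ Xₙ`. -/
def zArrow : ∀ n : ℕ, Z X n ⟶ X _⦋n⦌ := fun n => match n with
  | 0 => 𝟙 _
  | n + 1 => kernel.ι (MooreD X n) ≫ (NSub X (n + 1)).arrow

/-- The canonical quotient map `qₙ : ZₙX ⟶ HₙX`. -/
def q : ∀ n : ℕ, Z X n ⟶ H X n := fun n => match n with
  | 0 => @inv _ _ _ _ (⊤ : Subobject (X _⦋0⦌)).arrow Subobject.top_arrow_isIso ≫ cokernel.π (MooreD X 0)
  | n + 1 => cokernel.π (kernel.lift (MooreD X n) (MooreD X (n + 1)) (d_squared X n))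

end Moore

end MoorePart

section NablaPart

variable {C : Type u} [Category.{v} C] [HasFiniteLimits C]

namespace Nabla

/-- Pairs `i < j` in `[n+2]`. -/
def PairIdx (n : ℕ) : Type := {p : Fin (n + 3) × Fin (n + 3) // p.1 < p.2}

instance (n : ℕ) : Fintype (PairIdx n) := by unfold PairIdx; infer_instance

variable (X : SimplicialObject C)

/-- The object `∇ₙX` of `n`-cycles: `∇₀X = X₀ × X₀`, and for `n ≥ 1`, the subobject of
`Xₙ^{n+2}` of tuples `(x₀, …, x_{n+1})` with `∂ᵢ ∘ xⱼ = ∂_{j-1} ∘ xᵢ` for `i < j` in `[n+1]`. -/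
def obj : ℕ → C := fun n => match n with
  | 0 => Limits.prod (X _⦋0⦌) (X _⦋0⦌)
  | n + 1 =>
    equalizer
      (Pi.lift fun p : PairIdx n =>
        Pi.π (fun _ : Fin (n + 3) => X _⦋n + 1⦌) p.1.2 ≫
          X.δ (⟨p.1.1, by
            have h1 : (p.1.1 : ℕ) < (p.1.2 : ℕ) := p.2
            have h2 : (p.1.2 : ℕ) < n + 3 := p.1.2.isLt
            omega⟩ : Fin (n + 2)))
      (Pi.lift fun p : PairIdx n =>
        Pi.π (fun _ : Fin (n + 3) => X _⦋n + 1⦌) p.1.1 ≫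
          X.δ (⟨(p.1.2 : ℕ) - 1, by
            have h2 : (p.1.2 : ℕ) < n + 3 := p.1.2.isLt
            omega⟩ : Fin (n + 2)))

/-- The projection `prᵢ : ∇ₙX ⟶ Xₙ`. -/
def pr : ∀ (n : ℕ) (_ : Fin (n + 2)), obj X n ⟶ X _⦋n⦌ := fun n i => match n, i with
  | 0, i => if i = 0 then Limits.prod.fst else Limits.prod.snd
  | n + 1, i => equalizer.ι _ _ ≫ Pi.π (fun _ : Fin (n + 3) => X _⦋n + 1⦌) i

/-- The object `∇ₙ(X⁻)`, where `X⁻` is the shifted simplicial object with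
`(X⁻)ₙ = X_{n+1}` and `∂ᵢ⁻ = ∂_{i+1}`. -/
def shiftObj : ℕ → C := fun n => match n with
  | 0 => Limits.prod (X _⦋1⦌) (X _⦋1⦌)
  | n + 1 =>
    equalizer
      (Pi.lift fun p : PairIdx n =>
        Pi.π (fun _ : Fin (n + 3) => X _⦋n + 2⦌) p.1.2 ≫
          X.δ (⟨(p.1.1 : ℕ) + 1, by
            have h1 : (p.1.1 : ℕ) < (p.1.2 : ℕ) := p.2
            have h2 : (p.1.2 : ℕ) < n + 3 := p.1.2.isLt
            omega⟩ : Fin (n + 3)))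
      (Pi.lift fun p : PairIdx n =>
        Pi.π (fun _ : Fin (n + 3) => X _⦋n + 2⦌) p.1.1 ≫
          X.δ (⟨(p.1.2 : ℕ), by
            have h2 : (p.1.2 : ℕ) < n + 3 := p.1.2.isLt
            omega⟩ : Fin (n + 3)))

/-- The projection `prᵢ : ∇ₙ(X⁻) ⟶ X_{n+1}`. -/
def shiftPr : ∀ (n : ℕ) (_ : Fin (n + 2)), shiftObj X n ⟶ X _⦋n + 1⦌ := fun n i => match n, i with
  | 0, i => if i = 0 then Limits.prod.fst else Limits.prod.snd
  | n + 1, i => equalizer.ι _ _ ≫ Pi.π (fun _ : Fin (n + 3) => X _⦋n + 2⦌) i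

end Nabla

end NablaPart

section HornPart

variable {C : Type u} [Category.{v} C]


/-- An `(n+1, k)`-horn of a simplicial object `A` with vertex of definition `X`:
a family `xᵢ : X ⟶ Aₙ` (`i ≠ k`) with `∂ᵢ ∘ xⱼ = ∂_{j-1} ∘ xᵢ` for `i < j`, `i, j ≠ k`. -/
structure HornData (A : SimplicialObject C) (n : ℕ) (k : Fin (n + 2)) (X : C) where
  x : ∀ i : Fin (n + 2), i ≠ k → (X ⟶ A _⦋n⦌)
  compat : ∀ (m : ℕ) (hm : n = m + 1) (i j : Fin (n + 2)) (hi : i ≠ k) (hj : j ≠ k)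
      (hij : (i : ℕ) < (j : ℕ)),
      x j hj ≫ eqToHom (by rw [hm]) ≫ A.δ (⟨(i : ℕ), by
          have := j.isLt; omega⟩ : Fin (m + 2)) =
      x i hi ≫ eqToHom (by rw [hm]) ≫ A.δ (⟨(j : ℕ) - 1, by
          have := j.isLt; omega⟩ : Fin (m + 2))

/-- `A` is Kan (internally, up to regular epimorphism). -/
def IsKanObject (A : SimplicialObject C) : Prop :=
  ∀ (n : ℕ) (k : Fin (n + 2)) (X : C) (h : HornData A n k X),
    ∃ (Y : C) (p : Y ⟶ X), IsRegEpi p ∧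
      ∃ a : Y ⟶ A _⦋n + 1⦌, ∀ (i : Fin (n + 2)) (hi : i ≠ k), a ≫ A.δ i = p ≫ h.x i hi

/-- `f : A ⟶ B` is a Kan fibration (internally, up to regular epimorphism). -/
def IsKanFibration {A B : SimplicialObject C} (f : A ⟶ B) : Prop :=
  ∀ (n : ℕ) (k : Fin (n + 2)) (X : C) (h : HornData A n k X) (b : X ⟶ B _⦋n + 1⦌),
    (∀ (i : Fin (n + 2)) (hi : i ≠ k), b ≫ B.δ i = h.x i hi ≫ f.app (op ⦋n⦌)) →
    ∃ (Y : C) (p : Y ⟶ X), IsRegEpi p ∧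
      ∃ a : Y ⟶ A _⦋n + 1⦌, a ≫ f.app (op ⦋n + 1⦌) = p ≫ b ∧
        ∀ (i : Fin (n + 2)) (hi : i ≠ k), a ≫ A.δ i = p ≫ h.x i hi

/-- A simplicial set (simplicial object of `Type`) is a Kan complex. -/
def IsKanSSet (K : SimplicialObject (Type w)) : Prop :=
  ∀ (n : ℕ) (k : Fin (n + 2)) (x : ∀ i : Fin (n + 2), i ≠ k → K _⦋n⦌),
    (∀ (m : ℕ) (hm : n = m + 1) (i j : Fin (n + 2)) (hi : i ≠ k) (hj : j ≠ k)
      (hij : (i : ℕ) < (j : ℕ)),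
      K.δ (⟨(i : ℕ), by have := j.isLt; omega⟩ : Fin (m + 2)) (_root_.cast (show K _⦋n⦌ = K _⦋m+1⦌ by rw [hm]) (x j hj)) =
      K.δ (⟨(j : ℕ) - 1, by have := j.isLt; omega⟩ : Fin (m + 2))
        (_root_.cast (show K _⦋n⦌ = K _⦋m+1⦌ by rw [hm]) (x i hi))) →
    ∃ y : K _⦋n + 1⦌, ∀ (i : Fin (n + 2)) (hi : i ≠ k), K.δ i y = x i hi

/-- A map of simplicial sets is a Kan fibration. -/
def IsKanFibrationSSet {K L : SimplicialObject (Type w)} (g : K ⟶ L) : Prop :=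
  ∀ (n : ℕ) (k : Fin (n + 2)) (x : ∀ i : Fin (n + 2), i ≠ k → K _⦋n⦌),
    (∀ (m : ℕ) (hm : n = m + 1) (i j : Fin (n + 2)) (hi : i ≠ k) (hj : j ≠ k)
      (hij : (i : ℕ) < (j : ℕ)),
      K.δ (⟨(i : ℕ), by have := j.isLt; omega⟩ : Fin (m + 2)) (_root_.cast (show K _⦋n⦌ = K _⦋m+1⦌ by rw [hm]) (x j hj)) =
      K.δ (⟨(j : ℕ) - 1, by have := j.isLt; omega⟩ : Fin (m + 2))
        (_root_.cast (show K _⦋n⦌ = K _⦋m+1⦌ by rw [hm]) (x i hi))) →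
    ∀ b : L _⦋n + 1⦌,
      (∀ (i : Fin (n + 2)) (hi : i ≠ k), L.δ i b = g.app (op ⦋n⦌) (x i hi)) →
      ∃ a : K _⦋n + 1⦌, g.app (op ⦋n + 1⦌) a = b ∧
        ∀ (i : Fin (n + 2)) (hi : i ≠ k), K.δ i a = x i hi

/-- The simplicial set `hom(P, A)`. -/
def homSimplicial (P : C) (A : SimplicialObject C) : SimplicialObject (Type v) :=
  A ⋙ coyoneda.obj (op P)

/-- The map of simplicial sets `hom(P, f)`. -/
def homSimplicialMap (P : C) {A B : SimplicialObject C} (f : A ⟶ B) :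
    homSimplicial P A ⟶ homSimplicial P B :=
  Functor.whiskerRight f (coyoneda.obj (op P))


end HornPart

section SSetPart


variable {K L : SimplicialObject (Type w)}

/-- The iterated degeneracy `σ₀ⁿ(x)` of a vertex `x`. -/
def bpt (K : SimplicialObject (Type w)) (x : K _⦋0⦌) : ∀ n : ℕ, K _⦋n⦌ := fun n => match n with
  | 0 => x
  | n + 1 => K.σ (0 : Fin (n + 1)) (bpt K x n)

/-- `Zₙ(K, x)`: the `n`-simplices all of whose faces are the basepoint. -/
def SZ (K : SimplicialObject (Type w)) (x : K _⦋0⦌) : ℕ → Type w := fun n => match n with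
  | 0 => K _⦋0⦌
  | n + 1 => { z : K.obj (op (SimplexCategory.mk (n + 1))) // ∀ i : Fin (n + 2), K.δ i z = bpt K x n }

/-- The underlying `n`-simplex of an element of `Zₙ(K, x)`. -/
def szVal {K : SimplicialObject (Type w)} {x : K _⦋0⦌} : ∀ {n : ℕ}, SZ K x n → K _⦋n⦌ := fun {n} z => match n, z with
  | 0, z => z
  | _ + 1, z => z.1

/-- The homotopy relation on `Zₙ(K, x)`: `z ∼ z'` iff there is `y ∈ K_{n+1}` with
`∂ᵢ(y) = x` for `i < n`, `∂ₙ(y) = z` and `∂_{n+1}(y) = z'`. -/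
def hRel (K : SimplicialObject (Type w)) (x : K _⦋0⦌) (n : ℕ) (z z' : SZ K x n) : Prop :=
  ∃ y : K _⦋n + 1⦌,
    (∀ i : Fin (n + 2), (i : ℕ) < n → K.δ i y = bpt K x n) ∧
    K.δ (⟨n, by omega⟩ : Fin (n + 2)) y = szVal z ∧
    K.δ (Fin.last (n + 1)) y = szVal z'

/-- The homotopy "group" `πₙ(K, x)` as a quotient set. -/
def piSet (K : SimplicialObject (Type w)) (x : K _⦋0⦌) (n : ℕ) : Type w :=
  Quot (hRel K x n)

theorem δ_app (g : K ⟶ L) {n : ℕ} (i : Fin (n + 2)) (z : K _⦋n + 1⦌) :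
    L.δ i (g.app (op ⦋n + 1⦌) z) = g.app (op ⦋n⦌) (K.δ i z) := by
  have := NatTrans.naturality_apply g ((SimplexCategory.δ i).op) z
  simpa [SimplicialObject.δ] using this.symm

theorem σ_app (g : K ⟶ L) {n : ℕ} (i : Fin (n + 1)) (z : K _⦋n⦌) :
    L.σ i (g.app (op ⦋n⦌) z) = g.app (op ⦋n + 1⦌) (K.σ i z) := by
  have := NatTrans.naturality_apply g ((SimplexCategory.σ i).op) z
  simpa [SimplicialObject.σ] using this.symm

theorem bpt_app (g : K ⟶ L) (x : K _⦋0⦌) :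
    ∀ n : ℕ, g.app (op ⦋n⦌) (bpt K x n) = bpt L (g.app (op ⦋0⦌) x) n := fun n => match n with
  | 0 => rfl
  | n + 1 => by rw [bpt, bpt, ← bpt_app g x n, σ_app]

/-- The map `Zₙ(K, x) → Zₙ(L, g(x))` induced by `g : K ⟶ L`. -/
def szMap (g : K ⟶ L) (x : K _⦋0⦌) : ∀ n : ℕ, SZ K x n → SZ L (g.app (op ⦋0⦌) x) n := fun n z => match n, z with
  | 0, z => g.app (op ⦋0⦌) z
  | n + 1, z => ⟨g.app (op ⦋n + 1⦌) z.1, fun i => by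
      rw [δ_app, z.2 i, bpt_app]⟩

theorem szVal_szMap (g : K ⟶ L) (x : K _⦋0⦌) :
    ∀ (n : ℕ) (z : SZ K x n), szVal (szMap g x n z) = g.app (op ⦋n⦌) (szVal z) := fun n z => match n, z with
  | 0, _ => rfl
  | _ + 1, _ => rfl

/-- The map `πₙ(K, x) → πₙ(L, g(x))` induced by `g : K ⟶ L`. -/
def piMap (g : K ⟶ L) (x : K _⦋0⦌) (n : ℕ) :
    piSet K x n → piSet L (g.app (op ⦋0⦌) x) n :=
  Quot.map (szMap g x n) (by
    rintro z z' ⟨y, h1, h2, h3⟩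
    refine ⟨g.app (op ⦋n + 1⦌) y, fun i hi => by rw [δ_app, h1 i hi, bpt_app], ?_, ?_⟩
    · rw [δ_app, h2, szVal_szMap]
    · rw [δ_app, h3, szVal_szMap])

/-- `g : K ⟶ L` is a weak equivalence of simplicial sets: it induces bijections on
all homotopy groups at all basepoints. -/
def IsWeakEquivalenceSSet (g : K ⟶ L) : Prop :=
  ∀ (n : ℕ) (x : K _⦋0⦌), Function.Bijective (piMap g x n)


end SSetPart


section HMapPart
variable {C : Type u} [Category.{v} C] [HasZeroMorphisms C] [HasFiniteLimits C] [HasCokernels C]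

/-- The data of the morphisms induced by a simplicial morphism `f : A ⟶ B` on Moore
complexes, on cycles, and on homology; each component is uniquely determined by the
stated compatibility. -/
structure HMapData {A B : SimplicialObject C} (f : A ⟶ B) where
  ν : ∀ n : ℕ, Moore.NObj A n ⟶ Moore.NObj B n
  hν : ∀ n : ℕ, ν n ≫ (Moore.NSub B n).arrow = (Moore.NSub A n).arrow ≫ f.app (op ⦋n⦌)
  κ : ∀ n : ℕ, kernel (Moore.MooreD A n) ⟶ kernel (Moore.MooreD B n)
  hκ : ∀ n : ℕ, κ n ≫ kernel.ι (Moore.MooreD B n) = kernel.ι (Moore.MooreD A n) ≫ ν (n + 1)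
  η : ∀ n : ℕ, Moore.H A n ⟶ Moore.H B n
  hη₀ : cokernel.π (Moore.MooreD A 0) ≫ η 0 = ν 0 ≫ cokernel.π (Moore.MooreD B 0)
  hη : ∀ n : ℕ,
    cokernel.π (kernel.lift (Moore.MooreD A n) (Moore.MooreD A (n + 1)) (Moore.d_squared A n)) ≫
        η (n + 1) =
      κ n ≫
        cokernel.π (kernel.lift (Moore.MooreD B n) (Moore.MooreD B (n + 1)) (Moore.d_squared B n))

/-- `f` is a homology isomorphism. -/
def IsHomologyIso {A B : SimplicialObject C} (f : A ⟶ B) : Prop :=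
  ∀ d : HMapData f, ∀ n : ℕ, IsIso (d.η n)

end HMapPart

/-!
`H₀A` is the cokernel of `∂₁` restricted to `K[∂₀]`. Protomodularity makes `K[∂₀]` and the
degeneracy `σ₀` jointly strongly epimorphic, so `H₀A = 0` says exactly that every morphism out
of `A₀` coequalizing `∂₀` and `∂₁` is zero. Protomodularity also makes every relation
difunctional, so the image of `(∂₀, ∂₁)`, a reflexive relation on `A₀`, is an equivalence
relation. By exactness it is the kernel pair of some `φ`; as `φ` coequalizes `∂₀` and `∂₁`, it
is zero when `H₀A = 0`, and then the image is all of `A₀ × A₀`. Conversely, an epimorphic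
`(∂₀, ∂₁)` forces any `g` with `∂₀ g = ∂₁ g` to satisfy `g = (0, 1) pr₂ g = (0, 1) pr₁ g = 0`.
-/

lemma isRegEpi_of_comp_eq_id {C : Type u} [Category.{v} C] {E B : C} (p : E ⟶ B) (s : B ⟶ E)
    (hs : s ≫ p = 𝟙 B) : IsRegEpi p :=
  have : IsSplitEpi p := ⟨⟨⟨s, hs⟩⟩⟩
  ⟨RegularEpi.ofSplitEpi p⟩

section Protomodularity

variable {C : Type u} [Category.{v} C] [HasZeroMorphisms C] [HasFiniteLimits C] [IsSemiAbelian C]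

lemma isIso_of_kernel_ι_factors_of_section_factors {E B W : C} (p : E ⟶ B) (s : B ⟶ E)
    (hs : s ≫ p = 𝟙 B) (w : W ⟶ E) [Mono w] (k : kernel p ⟶ W) (hk : k ≫ w = kernel.ι p)
    (t : B ⟶ W) (ht : t ≫ w = s) : IsIso w := by
  let u : kernel (w ≫ p) ⟶ kernel p :=
    kernel.lift p (kernel.ι (w ≫ p) ≫ w) (by simp)
  have hu : u ≫ kernel.ι p = kernel.ι (w ≫ p) ≫ w := kernel.lift_ι _ _ _
  let u' : kernel p ⟶ kernel (w ≫ p) := kernel.lift (w ≫ p) k (by simp [reassoc_of% hk])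
  have hu' : u' ≫ kernel.ι (w ≫ p) = k := kernel.lift_ι _ _ _
  have : IsIso u := by
    refine ⟨u', ?_, ?_⟩
    · rw [← cancel_mono (kernel.ι (w ≫ p)), ← cancel_mono w]
      simp only [Category.assoc, reassoc_of% hu', hk, hu, Category.id_comp]
    · rw [← cancel_mono (kernel.ι p)]
      simp [hu, reassoc_of% hu', hk]
  exact IsSemiAbelian.protomodular (w ≫ p) p
    (isRegEpi_of_comp_eq_id _ t (by rw [reassoc_of% ht, hs])) (isRegEpi_of_comp_eq_id p s hs)
    w (𝟙 B) (Category.comp_id _) u hu this inferInstance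

lemma exists_factor_of_kernel_ι_factors_of_section_factors {E B Y Z : C} (p : E ⟶ B)
    (s : B ⟶ E) (hs : s ≫ p = 𝟙 B) (h : E ⟶ Y) (m : Z ⟶ Y) [Mono m]
    (hk : ∃ k, k ≫ m = kernel.ι p ≫ h) (hs' : ∃ t, t ≫ m = s ≫ h) : ∃ t, t ≫ m = h := by
  obtain ⟨k, hk⟩ := hk
  obtain ⟨t, ht⟩ := hs'
  have := isIso_of_kernel_ι_factors_of_section_factors p s hs (pullback.fst h m)
    (pullback.lift _ k hk.symm) (pullback.lift_fst _ _ _) (pullback.lift _ t ht.symm)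
    (pullback.lift_fst _ _ _)
  exact ⟨inv (pullback.fst h m) ≫ pullback.snd h m, by simp [pullback.condition]⟩

lemma ext_of_kernel_ι_of_section {E B Y : C} (p : E ⟶ B) (s : B ⟶ E) (hs : s ≫ p = 𝟙 B)
    (f g : E ⟶ Y) (hk : kernel.ι p ≫ f = kernel.ι p ≫ g) (hs' : s ≫ f = s ≫ g) : f = g := by
  obtain ⟨t, ht⟩ := exists_factor_of_kernel_ι_factors_of_section_factors p s hs (𝟙 E)
    (equalizer.ι f g) ⟨equalizer.lift _ hk, by simp⟩ ⟨equalizer.lift _ hs', by simp⟩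
  rw [← Category.id_comp f, ← Category.id_comp g, ← ht, Category.assoc, Category.assoc,
    equalizer.condition]

end Protomodularity

instance IsSemiAbelian.isRegularCategory {C : Type u} [Category.{v} C] [HasZeroMorphisms C]
    [HasFiniteLimits C] [IsSemiAbelian C] : IsRegularCategory C where
  hasCoequalizersOfKernelPairs := IsSemiAbelian.hasCoequalizersOfKernelPairs
  regularEpiPullbackStable := IsSemiAbelian.regularEpiPullbackStable

section Regular

variable {C : Type u} [Category.{v} C] [HasFiniteLimits C] [IsRegularCategory C]

lemma exists_epi_lift_of_isRegEpi {X Y T : C} (e : X ⟶ Y) (he : IsRegEpi e) (y : T ⟶ Y) :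
    ∃ (T' : C) (t : T' ⟶ T) (x : T' ⟶ X), Epi t ∧ x ≫ e = t ≫ y := by
  obtain ⟨he'⟩ := IsRegularCategory.regularEpiPullbackStable e y he
  exact ⟨_, pullback.snd e y, pullback.fst e y, he'.epi, pullback.condition⟩

lemma exists_isRegEpi_mono_factorisation {X Y : C} (f : X ⟶ Y) :
    ∃ (I : C) (e : X ⟶ I) (m : I ⟶ Y), e ≫ m = f ∧ IsRegEpi e ∧ Mono m := by
  have := IsRegularCategory.hasCoequalizersOfKernelPairs f
  let e := coequalizer.π (pullback.fst f f) (pullback.snd f f)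
  let m := coequalizer.desc f pullback.condition
  have hem : e ≫ m = f := coequalizer.π_desc _ _
  have he : IsRegEpi e := ⟨Cofork.IsColimit.regularEpi (colimit.isColimit _)⟩
  refine ⟨_, e, m, hem, he, ⟨fun {T} a b hab => ?_⟩⟩
  -- Lift `a` and `b` to `X` along covers; the lifts are identified by `f`, hence by `e`.
  obtain ⟨T₁, t₁, x₁, _, hx₁⟩ := exists_epi_lift_of_isRegEpi e he a
  obtain ⟨T₂, t₂, x₂, _, hx₂⟩ := exists_epi_lift_of_isRegEpi e he (t₁ ≫ b)
  have hf : (t₂ ≫ x₁) ≫ f = x₂ ≫ f := by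
    rw [← hem, Category.assoc, reassoc_of% hx₁, reassoc_of% hx₂, hab]
  have he' : (t₂ ≫ x₁) ≫ e = x₂ ≫ e := by
    simpa only [pullback.lift_fst_assoc, pullback.lift_snd_assoc, Category.assoc] using
      pullback.lift _ _ hf ≫= coequalizer.condition (pullback.fst f f) (pullback.snd f f)
  rw [← cancel_epi (t₂ ≫ t₁), Category.assoc, Category.assoc, ← hx₁, ← hx₂, ← Category.assoc, he']

end Regular

attribute [local simp] prod.lift_fst prod.lift_snd prod.lift_fst_assoc prod.lift_snd_assoc
  pullback.lift_fst pullback.lift_snd pullback.lift_fst_assoc pullback.lift_snd_assoc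

section Relations

variable {C : Type u} [Category.{v} C] [HasZeroMorphisms C] [HasFiniteLimits C] [IsSemiAbelian C]
variable {R X : C} (r₀ r₁ : R ⟶ X) [Mono (prod.lift r₀ r₁)]

lemma relation_unital {T : C} (x y : T ⟶ R) (hx : x ≫ r₁ = 0) (hy : y ≫ r₀ = 0) :
    ∃ z : T ⟶ R, z ≫ r₀ = x ≫ r₀ ∧ z ≫ r₁ = y ≫ r₁ := by
  obtain ⟨τ, hτ⟩ := exists_factor_of_kernel_ι_factors_of_section_factors
    (prod.snd : kernel r₁ ⨯ kernel r₀ ⟶ _) (prod.lift 0 (𝟙 _)) (prod.lift_snd _ _)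
    (prod.map (kernel.ι r₁ ≫ r₀) (kernel.ι r₀ ≫ r₁)) (prod.lift r₀ r₁)
    ⟨kernel.ι prod.snd ≫ prod.fst ≫ kernel.ι r₁, by ext <;> simp [kernel.condition_assoc]⟩
    ⟨kernel.ι r₀, by ext <;> simp⟩
  refine ⟨prod.lift (kernel.lift r₁ x hx) (kernel.lift r₀ y hy) ≫ τ, ?_, ?_⟩
  · simpa using prod.lift (kernel.lift r₁ x hx) (kernel.lift r₀ y hy) ≫= hτ =≫ prod.fst
  · simpa using prod.lift (kernel.lift r₁ x hx) (kernel.lift r₀ y hy) ≫= hτ =≫ prod.snd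

lemma relation_difunctional {T : C} (t₁ t₂ t₃ : T ⟶ R) (h₁₂ : t₁ ≫ r₁ = t₂ ≫ r₁)
    (h₂₃ : t₂ ≫ r₀ = t₃ ≫ r₀) : ∃ t : T ⟶ R, t ≫ r₀ = t₁ ≫ r₀ ∧ t ≫ r₁ = t₃ ≫ r₁ := by
  -- `P` is the object of triples `(a, b, c)` with `a r₁ = b r₁` and `b r₀ = c r₀`,
  -- split over `R` by `b` with the diagonal as section.
  let P := pullback (pullback.snd r₁ r₁ ≫ r₀) r₀
  let a : P ⟶ R := pullback.fst _ _ ≫ pullback.fst _ _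
  let b : P ⟶ R := pullback.fst _ _ ≫ pullback.snd _ _
  let c : P ⟶ R := pullback.snd _ _
  have hab : a ≫ r₁ = b ≫ r₁ := by simp [a, b, pullback.condition]
  have hbc : b ≫ r₀ = c ≫ r₀ := by simp [b, c, pullback.condition]
  let δ : R ⟶ P := pullback.lift (pullback.lift (𝟙 R) (𝟙 R) rfl) (𝟙 R) (by simp)
  have hδb : δ ≫ b = 𝟙 R := by simp [δ, b]
  obtain ⟨z, hz₀, hz₁⟩ := relation_unital r₀ r₁ (kernel.ι b ≫ a) (kernel.ι b ≫ c)
    (by simp [hab]) (by simp [← hbc])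
  obtain ⟨l, hl⟩ := exists_factor_of_kernel_ι_factors_of_section_factors b δ hδb
    (prod.lift (a ≫ r₀) (c ≫ r₁)) (prod.lift r₀ r₁)
    ⟨z, by ext <;> simp [hz₀, hz₁]⟩ ⟨𝟙 R, by ext <;> simp [δ, a, c]⟩
  let τ : T ⟶ P := pullback.lift (pullback.lift t₁ t₂ h₁₂) t₃ (by simp [h₂₃])
  have hτa : τ ≫ a = t₁ := by simp [τ, a]
  have hτc : τ ≫ c = t₃ := by simp [τ, c]
  refine ⟨τ ≫ l, ?_, ?_⟩
  · simpa [reassoc_of% hτa] using τ ≫= hl =≫ prod.fst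
  · simpa [reassoc_of% hτc] using τ ≫= hl =≫ prod.snd

lemma equivalence_of_reflexive_relation (δ : X ⟶ R) (h₀ : δ ≫ r₀ = 𝟙 X) (h₁ : δ ≫ r₁ = 𝟙 X)
    (T : C) : _root_.Equivalence fun x y : T ⟶ X => ∃ t : T ⟶ R, t ≫ r₀ = x ∧ t ≫ r₁ = y where
  refl x := ⟨x ≫ δ, by simp [h₀], by simp [h₁]⟩
  symm := by
    rintro x y ⟨t, rfl, rfl⟩
    obtain ⟨t', ht'₀, ht'₁⟩ := relation_difunctional r₀ r₁ (t ≫ r₁ ≫ δ) t (t ≫ r₀ ≫ δ)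
      (by simp [h₁]) (by simp [h₀])
    exact ⟨t', by simpa [h₀] using ht'₀, by simpa [h₁] using ht'₁⟩
  trans := by
    rintro x y z ⟨t, rfl, rfl⟩ ⟨s, hs, rfl⟩
    exact relation_difunctional r₀ r₁ t (s ≫ r₀ ≫ δ) s (by simp [h₁, hs]) (by simp [h₀])

end Relations

lemma isIso_prod_lift_of_isKernelPair_zero {C : Type u} [Category.{v} C] [HasZeroMorphisms C]
    {R X Y : C} [HasBinaryProduct X X] {r₀ r₁ : R ⟶ X} (h : IsKernelPair (0 : X ⟶ Y) r₀ r₁) :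
    IsIso (prod.lift r₀ r₁) := by
  have hl := h.lift_fst prod.fst prod.snd (by simp)
  have hr := h.lift_snd prod.fst prod.snd (by simp)
  refine ⟨h.lift prod.fst prod.snd (by simp), ?_, by ext <;> simp [hl, hr]⟩
  exact h.hom_ext (by simp [hl]) (by simp [hr])

lemma eq_zero_of_comp_eq_comp_of_epi_prod_lift {C : Type u} [Category.{v} C]
    [HasZeroMorphisms C] {X₁ X₀ Y : C} [HasBinaryProduct X₀ X₀] {d₀ d₁ : X₁ ⟶ X₀}
    [Epi (prod.lift d₀ d₁)] {g : X₀ ⟶ Y} (hg : d₀ ≫ g = d₁ ≫ g) : g = 0 := by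
  have h : (prod.fst : X₀ ⨯ X₀ ⟶ X₀) ≫ g = prod.snd ≫ g := by
    rw [← cancel_epi (prod.lift d₀ d₁)]
    simpa using hg
  simpa using prod.lift 0 (𝟙 X₀) ≫= h.symm

section ReflexiveGraph

variable {C : Type u} [Category.{v} C] [HasZeroMorphisms C] [HasFiniteLimits C] [IsSemiAbelian C]
variable {X₁ X₀ : C} {d₀ d₁ : X₁ ⟶ X₀} {s : X₀ ⟶ X₁}

lemma comp_eq_comp_iff_kernel_ι_comp_eq_zero_of_reflexive (h₀ : s ≫ d₀ = 𝟙 X₀)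
    (h₁ : s ≫ d₁ = 𝟙 X₀) {Y : C} (g : X₀ ⟶ Y) :
    d₀ ≫ g = d₁ ≫ g ↔ kernel.ι d₀ ≫ d₁ ≫ g = 0 := by
  refine ⟨fun hg => by rw [← hg, kernel.condition_assoc, zero_comp], fun hg => ?_⟩
  exact ext_of_kernel_ι_of_section d₀ s h₀ _ _ (by rw [hg, kernel.condition_assoc, zero_comp])
    (by rw [reassoc_of% h₀, reassoc_of% h₁])

lemma isRegEpi_prod_lift_of_reflexive (h₀ : s ≫ d₀ = 𝟙 X₀) (h₁ : s ≫ d₁ = 𝟙 X₀)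
    (hQ : ∀ (Y : C) (g : X₀ ⟶ Y), d₀ ≫ g = d₁ ≫ g → g = 0) : IsRegEpi (prod.lift d₀ d₁) := by
  obtain ⟨I, e, m, hem, he, hm⟩ := exists_isRegEpi_mono_factorisation (prod.lift d₀ d₁)
  have hm' : prod.lift (m ≫ prod.fst) (m ≫ prod.snd) = m := by ext <;> simp
  have : Mono (prod.lift (m ≫ prod.fst) (m ≫ prod.snd)) := by rwa [hm']
  have he₀ : e ≫ m ≫ prod.fst = d₀ := by simp [reassoc_of% hem]
  have he₁ : e ≫ m ≫ prod.snd = d₁ := by simp [reassoc_of% hem]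
  obtain ⟨Q, φ, hφ⟩ := IsSemiAbelian.exactEquivalenceRelations (m ≫ prod.fst) (m ≫ prod.snd)
    (fun a b ha hb => (cancel_mono m).1 (by ext <;> simp [ha, hb]))
    (equivalence_of_reflexive_relation _ _ (s ≫ e) (by simp [he₀, h₀]) (by simp [he₁, h₁]))
  have hφ : IsKernelPair (0 : X₀ ⟶ Q) (m ≫ prod.fst) (m ≫ prod.snd) := by
    convert hφ
    refine (hQ Q φ ?_).symm
    simpa only [Category.assoc, reassoc_of% he₀, reassoc_of% he₁] using e ≫= hφ.w
  have : IsIso m := hm' ▸ isIso_prod_lift_of_isKernelPair_zero hφ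
  exact hem ▸ (MorphismProperty.RespectsIso.postcomp _ m e ⟨he⟩ :
    (MorphismProperty.regularEpi C) (e ≫ m)).regularEpi

lemma isRegEpi_prod_lift_iff_of_reflexive (h₀ : s ≫ d₀ = 𝟙 X₀) (h₁ : s ≫ d₁ = 𝟙 X₀) :
    IsRegEpi (prod.lift d₀ d₁) ↔ ∀ (Y : C) (g : X₀ ⟶ Y), d₀ ≫ g = d₁ ≫ g → g = 0 := by
  refine ⟨fun ⟨h⟩ Y g hg => ?_, isRegEpi_prod_lift_of_reflexive h₀ h₁⟩
  have := h.epi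
  exact eq_zero_of_comp_eq_comp_of_epi_prod_lift hg

end ReflexiveGraph

lemma isZero_cokernel_iff {C : Type u} [Category.{v} C] [HasZeroMorphisms C] {X Y : C}
    (f : X ⟶ Y) [HasCokernel f] :
    IsZero (cokernel f) ↔ ∀ (Z : C) (g : Y ⟶ Z), f ≫ g = 0 → g = 0 := by
  refine ⟨fun h Z g hg => ?_, fun h => IsZero.of_epi_eq_zero _ (h _ _ (cokernel.condition f))⟩
  rw [← cokernel.π_desc f g hg, h.eq_of_src (cokernel.desc f g hg) 0, comp_zero]

namespace Moore

variable {C : Type u} [Category.{v} C] [HasZeroMorphisms C] [HasFiniteLimits C]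

lemma NSub_one (X : SimplicialObject C) : NSub X 1 = kernelSubobject (X.δ 0) := by
  simp [NSub]

lemma NSub_one_arrow_comp_eq_zero_iff (X : SimplicialObject C) {Y : C} (h : X _⦋1⦌ ⟶ Y) :
    (NSub X 1).arrow ≫ h = 0 ↔ kernel.ι (X.δ 0) ≫ h = 0 := by
  rw [NSub_one, ← kernelSubobject_arrow, Category.assoc]
  exact ⟨fun h' => by simpa using (kernelSubobjectIso _).inv ≫= h', fun h' => by simp [h']⟩

variable [HasCokernels C]

lemma isZero_H_zero_iff (X : SimplicialObject C) :
    IsZero (H X 0) ↔ ∀ (Y : C) (g : X _⦋0⦌ ⟶ Y), kernel.ι (X.δ 0) ≫ X.δ 1 ≫ g = 0 → g = 0 := by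
  let ι := (⊤ : Subobject (X _⦋0⦌)).arrow
  refine (isZero_cokernel_iff (MooreD X 0)).trans ?_
  change (∀ (Y : C) (g : ((⊤ : Subobject (X _⦋0⦌)) : C) ⟶ Y),
    ((NSub X 1).arrow ≫ X.δ 1 ≫ inv ι) ≫ g = 0 → g = 0) ↔ _
  simp only [Category.assoc, NSub_one_arrow_comp_eq_zero_iff]
  constructor
  · intro h Y g hg
    have := h Y (ι ≫ g) (by rwa [IsIso.inv_hom_id_assoc])
    exact (cancel_epi ι).1 (this.trans comp_zero.symm)
  · intro h Y g hg
    exact (cancel_epi (inv ι)).1 ((h Y _ hg).trans comp_zero.symm)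

end Moore

/-- For a simplicial object `A` in a semi-abelian category, `H₀A = 0` iff
`(∂₀, ∂₁) : A₁ ⟶ A₀ × A₀` is a regular epimorphism. -/
theorem H0_zero_iff_lift_regular_epi
    {C : Type u} [Category.{v} C] [HasZeroMorphisms C] [HasFiniteLimits C] [IsSemiAbelian C]
    [HasCokernels C] (A : SimplicialObject C) :
    IsZero (Moore.H A 0) ↔
      IsRegEpi (prod.lift (A.δ (0 : Fin 2)) (A.δ (1 : Fin 2))) := by
  have h₀ : A.σ 0 ≫ A.δ 0 = 𝟙 (A _⦋0⦌) := A.δ_comp_σ_self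
  have h₁ : A.σ 0 ≫ A.δ 1 = 𝟙 (A _⦋0⦌) := A.δ_comp_σ_succ
  rw [Moore.isZero_H_zero_iff, isRegEpi_prod_lift_iff_of_reflexive h₀ h₁]
  simp only [comp_eq_comp_iff_kernel_ι_comp_eq_zero_of_reflexive h₀ h₁]

end SemiAbPaper
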